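/- arXiv:1908.05584 — 2 statements merged into one kernel-verified Lean document; each statement's English description precedes it below -/
import Mathlib

section
/- Let ρ₀ and ρ₁ be the two-qubit density matrices ρ_b = (1/2)(P_b ⊗ (I₂/2)) + (1/2)((I₂/2) ⊗ (H * P_b * H)) for b = 0, 1, and let Δ = ρ₀ − ρ₁. Then Δ is Hermitian, Δ * Δ is positive semidefinite, and the trace of the positive semidefinite square root of Δ * Δ equals 1. Consequently the trace distance (1/2)·Tr|ρ₀ − ρ₁| between the two density operators corresponding to Alice's two possible input values in Protocol 1 equals 1/2. -/
open Matrix Kronecker ComplexOrder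

noncomputable section

/-- The positive semidefinite square root of a positive semidefinite matrix
(the definition `Matrix.PosSemidef.sqrt` of the older Mathlib, since removed). -/
def Matrix.PosSemidef.sqrt {n : Type*} [Fintype n] [DecidableEq n] {A : Matrix n n ℂ}
    (hA : A.PosSemidef) : Matrix n n ℂ :=
  hA.1.eigenvectorUnitary.1 * diagonal ((↑) ∘ (√·) ∘ hA.1.eigenvalues) *
    (star hA.1.eigenvectorUnitary : Matrix n n ℂ)

def P0 : Matrix (Fin 2) (Fin 2) ℂ := !![1, 0; 0, 0]

def P1 : Matrix (Fin 2) (Fin 2) ℂ := !![0, 0; 0, 1]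

/-- The Hadamard gate. -/
def Hg : Matrix (Fin 2) (Fin 2) ℂ := (Real.sqrt 2 : ℂ)⁻¹ • !![1, 1; 1, -1]

/-- The average state Alice sends in Protocol 1 when her input bit corresponds to the
projector `Pb`: with probability 1/2 she sends `|b⟩⟨b| ⊗ I/2` and with probability 1/2
she sends `I/2 ⊗ H|b⟩⟨b|H`, expressed as a 4×4 matrix via the lexicographic
identification `Fin 2 × Fin 2 ≃ Fin 4`. -/
def rho (Pb : Matrix (Fin 2) (Fin 2) ℂ) : Matrix (Fin 4) (Fin 4) ℂ :=
  Matrix.reindex finProdFinEquiv finProdFinEquiv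
    ((1/2 : ℂ) • (Pb ⊗ₖ ((1/2 : ℂ) • (1 : Matrix (Fin 2) (Fin 2) ℂ))) +
     (1/2 : ℂ) • (((1/2 : ℂ) • (1 : Matrix (Fin 2) (Fin 2) ℂ)) ⊗ₖ (Hg * Pb * Hg)))

/-!
Writing `Z = P₀ - P₁` and `X = H Z H`, the difference is `Δ = ρ₀ - ρ₁ = (Z ⊗ I + I ⊗ X) / 4`,
a sum of two commuting involutions; hence `Δ³ = Δ / 4`, the spectrum of `Δ` lies in
`{0, ±1/2}` and `|Δ| = 2 Δ²`, so `Tr |Δ| = 2 Tr Δ² = 1`.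
-/

namespace Matrix.PosSemidef

variable {n : Type*} [Fintype n] [DecidableEq n]

open scoped MatrixOrder in
theorem sqrt_eq_cfcSqrt {A : Matrix n n ℂ} (hA : A.PosSemidef) : hA.sqrt = CFC.sqrt A := by
  rw [CFC.sqrt_eq_cfc, cfc_nnreal_eq_real _ A hA.nonneg, hA.1.cfc_eq]
  simp only [IsHermitian.cfc, Matrix.PosSemidef.sqrt, Unitary.conjStarAlgAut_apply]
  congr 3
  funext i
  simp [Real.coe_sqrt, Real.coe_toNNReal', max_eq_left (hA.eigenvalues_nonneg i)]

open scoped MatrixOrder in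
theorem sqrt_eq_of_mul_self_eq {A B : Matrix n n ℂ} (hA : A.PosSemidef) (hB : B.PosSemidef)
    (hBB : B * B = A) : hA.sqrt = B := by
  rw [sqrt_eq_cfcSqrt, CFC.sqrt_eq_iff _ _ hA.nonneg hB.nonneg, hBB]

theorem sqrt_mul_self_eq_inv_smul {A : Matrix n n ℂ} (hAA : (A * A).PosSemidef) {c : ℝ}
    (hc : 0 < c) (hcube : A * A * A = ((c : ℂ) ^ 2) • A) :
    hAA.sqrt = ((c : ℂ)⁻¹) • (A * A) := by
  have hc' : (c : ℂ) ≠ 0 := Complex.ofReal_ne_zero.mpr hc.ne'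
  refine hAA.sqrt_eq_of_mul_self_eq (hAA.smul ?_) ?_
  · rw [← Complex.ofReal_inv]
    exact_mod_cast (inv_pos.mpr hc).le
  · rw [smul_mul_smul_comm, ← mul_assoc, hcube, smul_mul_assoc, smul_smul]
    field_simp
    simp

end Matrix.PosSemidef

def rhoDiff : Matrix (Fin 4) (Fin 4) ℂ :=
  (1/4 : ℂ) • !![1, 1, 0, 0; 1, 1, 0, 0; 0, 0, -1, 1; 0, 0, 1, -1]

theorem ofReal_sqrt_two_sq : (√2 : ℂ) ^ 2 = 2 := by
  rw [← Complex.ofReal_pow, Real.sq_sqrt zero_le_two]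
  norm_num

theorem Hg_mul_P0_mul_Hg : Hg * P0 * Hg = (1/2 : ℂ) • !![1, 1; 1, 1] := by
  ext i j
  fin_cases i <;> fin_cases j <;>
    simp [Hg, P0, Matrix.mul_apply, Fin.sum_univ_two] <;> field_simp <;> rw [ofReal_sqrt_two_sq]

theorem Hg_mul_P1_mul_Hg : Hg * P1 * Hg = (1/2 : ℂ) • !![1, -1; -1, 1] := by
  ext i j
  fin_cases i <;> fin_cases j <;>
    simp [Hg, P1, Matrix.mul_apply, Fin.sum_univ_two] <;> field_simp <;> rw [ofReal_sqrt_two_sq]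

theorem rho_P0_sub_rho_P1 : rho P0 - rho P1 = rhoDiff := by
  rw [rho, rho, Hg_mul_P0_mul_Hg, Hg_mul_P1_mul_Hg]
  ext i j
  fin_cases i <;> fin_cases j <;>
    simp [rhoDiff, P0, P1, finProdFinEquiv, Fin.divNat, Fin.modNat] <;> norm_num

theorem rhoDiff_isHermitian : rhoDiff.IsHermitian := by
  ext i j
  fin_cases i <;> fin_cases j <;> simp [rhoDiff]

theorem rhoDiff_cube : rhoDiff * rhoDiff * rhoDiff = ((1/2 : ℝ) : ℂ) ^ 2 • rhoDiff := by
  ext i j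
  fin_cases i <;> fin_cases j <;>
    simp [rhoDiff, Matrix.mul_apply, Fin.sum_univ_four] <;> norm_num

theorem trace_rhoDiff_mul_self : (rhoDiff * rhoDiff).trace = 1/2 := by
  simp [rhoDiff, Matrix.trace, Fin.sum_univ_four]
  norm_num

/-- The trace distance between the two density operators corresponding to Alice's two
possible input values in Protocol 1 equals 1/2: the difference `Δ = ρ₀ − ρ₁` is
Hermitian, `Δ·Δ` is positive semidefinite, the trace of its positive semidefinite
square root (i.e. `Tr|Δ|`) equals 1, and hence `(1/2)·Tr|ρ₀ − ρ₁| = 1/2`. -/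
theorem trace_distance_protocol1 :
    (rho P0 - rho P1).IsHermitian ∧
    ∃ h : ((rho P0 - rho P1) * (rho P0 - rho P1)).PosSemidef,
      h.sqrt.trace = 1 ∧ (1/2 : ℂ) * h.sqrt.trace = 1/2 := by
  rw [rho_P0_sub_rho_P1]
  have hsq : (rhoDiff * rhoDiff).PosSemidef := by
    simpa [rhoDiff_isHermitian.eq] using posSemidef_conjTranspose_mul_self rhoDiff
  have htrace : hsq.sqrt.trace = 1 := by
    rw [hsq.sqrt_mul_self_eq_inv_smul one_half_pos rhoDiff_cube, trace_smul,
      trace_rhoDiff_mul_self]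
    norm_num
  exact ⟨rhoDiff_isHermitian, hsq, htrace, by rw [htrace]; norm_num⟩
end
end

section
/- Let ρ₀ and ρ₁ be the two-qubit density matrices ρ_b = (1/2)(P_b ⊗ (I₂/2)) + (1/2)((I₂/2) ⊗ (H * P_b * H)) for b = 0, 1, and let M = P₀ ⊗ (H * P₀ * H) (the projector onto |0⟩⟨0| ⊗ |+⟩⟨+|, corresponding to measuring the first qubit in the Z basis and the second qubit in the X basis). Then (1/2) · Tr(ρ₀ * M) + (1/2) · Tr(ρ₁ * (I₄ − M)) = 3/4. That is, this measurement strategy guesses Alice's uniformly random input bit correctly with probability 3/4. -/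
open Matrix Kronecker

noncomputable section

/-- The projector onto `|0⟩⟨0| ⊗ |+⟩⟨+|`: measuring the first qubit in the Z basis and
the second qubit in the X basis. -/
def Mmeas : Matrix (Fin 4) (Fin 4) ℂ :=
  Matrix.reindex finProdFinEquiv finProdFinEquiv (P0 ⊗ₖ (Hg * P0 * Hg))

/-- The fixed measurement strategy (Z basis on the first qubit, X basis on the second)
guesses Alice's uniformly random input bit in Protocol 1 correctly with probability 3/4. -/
theorem guessing_probability_three_quarters :
    (1/2 : ℂ) * (rho P0 * Mmeas).trace +
      (1/2 : ℂ) * (rho P1 * ((1 : Matrix (Fin 4) (Fin 4) ℂ) - Mmeas)).trace = 3/4 := by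
  have h2 : ((Real.sqrt 2 : ℝ) : ℂ) * ((Real.sqrt 2 : ℝ) : ℂ) = 2 := by
    norm_cast
    rw [Real.mul_self_sqrt] ; norm_num
  have hs : ((Real.sqrt 2 : ℂ))⁻¹ * ((Real.sqrt 2 : ℂ))⁻¹ = 1/2 := by
    rw [← mul_inv, h2]; norm_num
  set_option maxHeartbeats 2000000 in
  simp only [rho, Mmeas, P0, P1, Hg, Matrix.trace, Matrix.diag, Matrix.mul_apply,
    Matrix.reindex_apply, Matrix.submatrix_apply, Matrix.kroneckerMap_apply,
    Matrix.add_apply, Matrix.smul_apply, Matrix.sub_apply, Matrix.one_apply,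
    Fin.sum_univ_succ, Fin.sum_univ_zero, finProdFinEquiv_symm_apply]
  norm_num [Fin.divNat, Fin.modNat, Fin.ext_iff, smul_eq_mul]
  rw [hs]
  norm_num
end
end
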